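/- Let φ(z) = ∫₀^∞ e^{-tz} dμ(t), μ finite nonnegative with μ((0,∞)) > 0, fix q ∈ [1,∞], r > 0, set b₀ = r/2^{1/q} (with b₀ = r when q = ∞), and suppose Δ₁ > Δ₂ > 0 satisfy (1/|μ|)∫₀^∞ e^{-4b₀²t} dμ(t) < (Δ₁² − Δ₂²)/(Δ₁² + Δ₂²). Then every maximizer β* of L_Δ over the ℓ_q-ball {β ∈ ℝ² : ‖β‖_q ≤ r} satisfies β*₂ = 0 and |β*₁| = r, i.e., supp(β*) = {1}. -/

import Mathlib

open MeasureTheory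

/-- φ(z) = ∫₀^∞ e^{-tz} dμ(t). -/
noncomputable def phi (μ : Measure ℝ) (z : ℝ) : ℝ := ∫ t, Real.exp (-(t * z)) ∂μ

/-- L_Δ(β) = (φ(0) − φ(4β₁² + 4β₂²))(Δ₁² + Δ₂²) − (φ(4β₁²) − φ(4β₂²))(Δ₁² − Δ₂²). -/
noncomputable def L (φ : ℝ → ℝ) (Δ₁ Δ₂ β₁ β₂ : ℝ) : ℝ :=
  (φ 0 - φ (4 * β₁ ^ 2 + 4 * β₂ ^ 2)) * (Δ₁ ^ 2 + Δ₂ ^ 2)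
    - (φ (4 * β₁ ^ 2) - φ (4 * β₂ ^ 2)) * (Δ₁ ^ 2 - Δ₂ ^ 2)

/-- The ℓ_q norm of (β₁, β₂) ∈ ℝ², q ∈ [1, ∞], via `PiLp`. -/
noncomputable def lqNorm (q : ENNReal) (β₁ β₂ : ℝ) : ℝ :=
  ‖(WithLp.equiv q (Fin 2 → ℝ)).symm ![β₁, β₂]‖

/-!
Compare a maximizer `β` with the admissible point `(r, 0)`. With `A = Δ₁² + Δ₂²`, `B = Δ₁² − Δ₂²`,
`a = 4β₁²`, `b = 4β₂²`, `R = 4r²` and `x = e^{-ta}`, `y = e^{-tb}`, `z = e^{-tR}`, the gap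
`L(r, 0) − L(β)` is the `μ`-integral of
`A x y + B x − B y + B − (A + B) z = (x − z)(A y + B) + (1 − y)(B − A z)`.
The first term is nonnegative because `a ≤ R`. In the second, both factors increase with `t` and
`B − A z` changes sign at `s = log (A / B) / R`, so the product is at least `(1 − e^{-sb})(B − A z)`,
whose integral `(1 − e^{-sb})(B φ(0) − A φ(R))` is positive when `b > 0` by the hypothesis on `b₀`
(note `φ(R) ≤ φ(4b₀²)`). Hence `β₂ = 0`, and `L(β₁, 0) = 2Δ₁²(φ(0) − φ(4β₁²))` is maximal only
at `|β₁| = r` because `φ` is strictly decreasing.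
-/

section lqNorm

variable {q : ENNReal}

lemma abs_le_lqNorm (hq : 1 ≤ q) (x y : ℝ) : |x| ≤ lqNorm q x y := by
  have := Fact.mk hq
  simpa [lqNorm] using PiLp.norm_apply_le (WithLp.toLp q ![x, y]) 0

lemma lqNorm_zero_right (hq : 1 ≤ q) (x : ℝ) : lqNorm q x 0 = |x| := by
  have := Fact.mk hq
  have hsingle : ![x, 0] = Pi.single 0 x := by ext i; fin_cases i <;> simp
  rw [lqNorm, hsingle, WithLp.equiv_symm_apply, ← PiLp.single, PiLp.norm_single,
    Real.norm_eq_abs]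

end lqNorm

section phi

variable {μ : Measure ℝ}

lemma phi_zero : phi μ 0 = μ.real Set.univ := by
  simp [phi]

lemma phi_zero_pos [IsFiniteMeasure μ] (hpos : 0 < μ (Set.Ioi 0)) : 0 < phi μ 0 := by
  rw [phi_zero, measureReal_def]
  exact ENNReal.toReal_pos (hpos.trans_le (measure_mono (Set.subset_univ _))).ne'
    (measure_ne_top μ _)

lemma ae_nonneg_of_measure_Iio_eq_zero (hsupp : μ (Set.Iio 0) = 0) : ∀ᵐ t ∂μ, 0 ≤ t := by
  simpa [ae_iff, Set.Iio] using hsupp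

lemma integrable_exp_neg_mul [IsFiniteMeasure μ] (hsupp : μ (Set.Iio 0) = 0) {z : ℝ}
    (hz : 0 ≤ z) : Integrable (fun t ↦ Real.exp (-(t * z))) μ := by
  refine (integrable_const 1).mono' (by fun_prop) ?_
  filter_upwards [ae_nonneg_of_measure_Iio_eq_zero hsupp] with t ht
  simpa using mul_nonneg ht hz

lemma phi_antitoneOn [IsFiniteMeasure μ] (hsupp : μ (Set.Iio 0) = 0) :
    AntitoneOn (phi μ) (Set.Ici 0) := fun z₁ h₁ z₂ _ h ↦ by
  refine integral_mono_ae (integrable_exp_neg_mul hsupp (le_trans h₁ h))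
    (integrable_exp_neg_mul hsupp h₁) ?_
  filter_upwards [ae_nonneg_of_measure_Iio_eq_zero hsupp] with t ht
  simpa using mul_le_mul_of_nonneg_left h ht

lemma phi_strictAntiOn [IsFiniteMeasure μ] (hsupp : μ (Set.Iio 0) = 0)
    (hpos : 0 < μ (Set.Ioi 0)) : StrictAntiOn (phi μ) (Set.Ici 0) := by
  intro z₁ (h₁ : 0 ≤ z₁) z₂ _ h
  have hi₁ := integrable_exp_neg_mul hsupp h₁
  have hi₂ := integrable_exp_neg_mul hsupp (h₁.trans h.le)
  have hi : Integrable (fun t ↦ Real.exp (-(t * z₁)) - Real.exp (-(t * z₂))) μ := hi₁.sub hi₂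
  have hgap : 0 < ∫ t, (Real.exp (-(t * z₁)) - Real.exp (-(t * z₂))) ∂μ := by
    rw [integral_pos_iff_support_of_nonneg_ae _ hi]
    · refine hpos.trans_le (measure_mono fun t (ht : 0 < t) ↦ ?_)
      simpa [sub_eq_zero] using (mul_lt_mul_of_pos_left h ht).ne
    · filter_upwards [ae_nonneg_of_measure_Iio_eq_zero hsupp] with t ht
      simpa using mul_le_mul_of_nonneg_left h.le ht
  rw [integral_sub hi₁ hi₂] at hgap
  exact sub_pos.mp hgap

lemma mul_phi_lt_of_integral_lt [IsFiniteMeasure μ] (hsupp : μ (Set.Iio 0) = 0)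
    (hpos : 0 < μ (Set.Ioi 0)) {A B b r : ℝ} (hA : 0 < A) (hbr : b ^ 2 ≤ r ^ 2)
    (h : (1 / (μ Set.univ).toReal) * ∫ t, Real.exp (-(4 * b ^ 2 * t)) ∂μ < B / A) :
    A * phi μ (4 * r ^ 2) < B * phi μ 0 := by
  have hint : ∫ t, Real.exp (-(4 * b ^ 2 * t)) ∂μ = phi μ (4 * b ^ 2) := by
    simp only [phi, mul_comm]
  rw [hint, ← measureReal_def, ← phi_zero, one_div_mul_eq_div,
    div_lt_div_iff₀ (phi_zero_pos hpos) hA] at h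
  have := phi_antitoneOn hsupp (Set.mem_Ici.mpr (by positivity))
    (Set.mem_Ici.mpr (by positivity)) (by linarith : 4 * b ^ 2 ≤ 4 * r ^ 2)
  linarith [mul_le_mul_of_nonneg_left this hA.le]

end phi

lemma Monotone.mul_le_mul_of_eq_zero {α : Type*} [LinearOrder α] {f g : α → ℝ}
    (hf : Monotone f) (hg : Monotone g) {s : α} (hs : g s = 0) (t : α) :
    f s * g t ≤ f t * g t := by
  rcases le_total s t with h | h
  · exact mul_le_mul_of_nonneg_right (hf h) (hs ▸ hg h)
  · exact mul_le_mul_of_nonpos_right (hf h) (hs ▸ hg h)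

lemma exists_pos_mul_le_phi_combination {μ : Measure ℝ} [IsFiniteMeasure μ]
    (hsupp : μ (Set.Iio 0) = 0) {A B a b R : ℝ} (hB : 0 < B) (hBA : B < A) (ha : 0 ≤ a)
    (haR : a ≤ R) (hb : 0 < b) (hR : 0 < R) :
    ∃ c > 0, c * (B * phi μ 0 - A * phi μ R) ≤
      A * phi μ (a + b) + B * phi μ a - B * phi μ b + B * phi μ 0 - (A + B) * phi μ R := by
  have hA : 0 < A := hB.trans hBA
  set s := Real.log (A / B) / R
  have hs : 0 < s := div_pos (Real.log_pos ((one_lt_div hB).mpr hBA)) hR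
  have hgs : B - A * Real.exp (-(s * R)) = 0 := by
    rw [div_mul_cancel₀ _ hR.ne', Real.exp_neg, Real.exp_log (by positivity), inv_div,
      mul_div_cancel₀ _ hA.ne', sub_self]
  have hf : Monotone fun t ↦ 1 - Real.exp (-(t * b)) := fun t₁ t₂ h ↦
    sub_le_sub_left (Real.exp_le_exp.mpr (by nlinarith)) 1
  have hg : Monotone fun t ↦ B - A * Real.exp (-(t * R)) := fun t₁ t₂ h ↦
    sub_le_sub_left (mul_le_mul_of_nonneg_left (Real.exp_le_exp.mpr (by nlinarith)) hA.le) B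
  refine ⟨1 - Real.exp (-(s * b)), by simpa using mul_pos hs hb, ?_⟩
  have hpt : ∀ᵐ t ∂μ,
      (1 - Real.exp (-(s * b))) * (B * Real.exp (-(t * 0)) - A * Real.exp (-(t * R))) ≤
        A * Real.exp (-(t * (a + b))) + B * Real.exp (-(t * a)) - B * Real.exp (-(t * b))
          + B * Real.exp (-(t * 0)) - (A + B) * Real.exp (-(t * R)) := by
    filter_upwards [ae_nonneg_of_measure_Iio_eq_zero hsupp] with t ht
    have hcross := hf.mul_le_mul_of_eq_zero hg hgs t
    have hzx : Real.exp (-(t * R)) ≤ Real.exp (-(t * a)) := Real.exp_le_exp.mpr (by nlinarith)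
    have hsplit : Real.exp (-(t * (a + b))) = Real.exp (-(t * a)) * Real.exp (-(t * b)) := by
      rw [← Real.exp_add]; ring_nf
    simp only [mul_zero, neg_zero, Real.exp_zero, mul_one] at hcross ⊢
    rw [hsplit]
    linarith [mul_nonneg (sub_nonneg.mpr hzx)
      (add_nonneg (mul_nonneg hA.le (Real.exp_pos (-(t * b))).le) hB.le)]
  have i0 := integrable_exp_neg_mul hsupp le_rfl
  have iR := integrable_exp_neg_mul hsupp hR.le
  have ia := integrable_exp_neg_mul hsupp ha
  have ib := integrable_exp_neg_mul hsupp hb.le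
  have iab := integrable_exp_neg_mul hsupp (add_nonneg ha hb.le)
  have := integral_mono_ae (by fun_prop) (by fun_prop) hpt
  simpa (disch := fun_prop) only [phi, integral_add, integral_sub, integral_const_mul] using this

lemma L_zero_right (φ : ℝ → ℝ) (Δ₁ Δ₂ x : ℝ) :
    L φ Δ₁ Δ₂ x 0 = 2 * Δ₁ ^ 2 * (φ 0 - φ (4 * x ^ 2)) := by
  simp only [L, ne_eq, OfNat.ofNat_ne_zero, not_false_eq_true, zero_pow, mul_zero, add_zero]
  ring

section L

variable {μ : Measure ℝ} [IsFiniteMeasure μ] {Δ₁ Δ₂ r x : ℝ}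

lemma L_lt_L_zero_right (hsupp : μ (Set.Iio 0) = 0) {y : ℝ} (h12 : Δ₂ < Δ₁) (h2 : 0 < Δ₂)
    (hr : 0 < r) (hx : |x| ≤ r) (hy : y ≠ 0)
    (hcond : (Δ₁ ^ 2 + Δ₂ ^ 2) * phi μ (4 * r ^ 2) < (Δ₁ ^ 2 - Δ₂ ^ 2) * phi μ 0) :
    L (phi μ) Δ₁ Δ₂ x y < L (phi μ) Δ₁ Δ₂ r 0 := by
  obtain ⟨c, hc, hle⟩ := exists_pos_mul_le_phi_combination hsupp (A := Δ₁ ^ 2 + Δ₂ ^ 2)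
    (B := Δ₁ ^ 2 - Δ₂ ^ 2) (a := 4 * x ^ 2) (b := 4 * y ^ 2) (R := 4 * r ^ 2)
    (by nlinarith) (by nlinarith) (by positivity)
    (by nlinarith [sq_le_sq.mpr (hx.trans (le_abs_self r))])
    (by positivity) (mul_pos four_pos (pow_pos hr 2))
  have hdiff : L (phi μ) Δ₁ Δ₂ r 0 - L (phi μ) Δ₁ Δ₂ x y =
      (Δ₁ ^ 2 + Δ₂ ^ 2) * phi μ (4 * x ^ 2 + 4 * y ^ 2) + (Δ₁ ^ 2 - Δ₂ ^ 2) * phi μ (4 * x ^ 2)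
        - (Δ₁ ^ 2 - Δ₂ ^ 2) * phi μ (4 * y ^ 2) + (Δ₁ ^ 2 - Δ₂ ^ 2) * phi μ 0
        - (Δ₁ ^ 2 + Δ₂ ^ 2 + (Δ₁ ^ 2 - Δ₂ ^ 2)) * phi μ (4 * r ^ 2) := by
    rw [L_zero_right, L]
    ring
  linarith [mul_pos hc (sub_pos.mpr hcond)]

lemma le_abs_of_L_zero_right_le (hsupp : μ (Set.Iio 0) = 0) (hpos : 0 < μ (Set.Ioi 0))
    (hΔ₁ : Δ₁ ≠ 0) (h : L (phi μ) Δ₁ Δ₂ r 0 ≤ L (phi μ) Δ₁ Δ₂ x 0) :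
    r ≤ |x| := by
  rw [L_zero_right, L_zero_right] at h
  have hφ : phi μ (4 * x ^ 2) ≤ phi μ (4 * r ^ 2) := by
    linarith [le_of_mul_le_mul_left h (by positivity : 0 < 2 * Δ₁ ^ 2)]
  rw [(phi_strictAntiOn hsupp hpos).le_iff_ge (Set.mem_Ici.mpr (by positivity))
    (Set.mem_Ici.mpr (by positivity))] at hφ
  exact (le_abs_self r).trans (sq_le_sq.mp (by linarith))

end L

theorem stmt18_general (μ : Measure ℝ) [IsFiniteMeasure μ] (hsupp : μ (Set.Iio 0) = 0)
    (hpos : 0 < μ (Set.Ioi 0)) (q : ENNReal) (hq : 1 ≤ q) (r : ℝ) (hr : 0 < r)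
    (b₀ : ℝ) (hb₀norm : lqNorm q b₀ b₀ = r)
    (Δ₁ Δ₂ : ℝ) (h12 : Δ₂ < Δ₁) (h2 : 0 < Δ₂)
    (hcond : (1 / (μ Set.univ).toReal) * ∫ t, Real.exp (-(4 * b₀ ^ 2 * t)) ∂μ
      < (Δ₁ ^ 2 - Δ₂ ^ 2) / (Δ₁ ^ 2 + Δ₂ ^ 2))
    (β : Fin 2 → ℝ) (hβ : lqNorm q (β 0) (β 1) ≤ r)
    (hmax : ∀ γ : Fin 2 → ℝ, lqNorm q (γ 0) (γ 1) ≤ r →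
      L (phi μ) Δ₁ Δ₂ (γ 0) (γ 1) ≤ L (phi μ) Δ₁ Δ₂ (β 0) (β 1)) :
    β 1 = 0 ∧ |β 0| = r := by
  have hβ₀ : |β 0| ≤ r := (abs_le_lqNorm hq _ _).trans hβ
  have hb₀r : b₀ ^ 2 ≤ r ^ 2 :=
    sq_le_sq.mpr ((hb₀norm ▸ abs_le_lqNorm hq b₀ b₀).trans (le_abs_self r))
  have hcond' := mul_phi_lt_of_integral_lt hsupp hpos (by positivity) hb₀r hcond
  have hmax_r := hmax ![r, 0] (by simp [lqNorm_zero_right hq, abs_of_pos hr])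
  simp only [Matrix.cons_val_zero, Matrix.cons_val_one] at hmax_r
  have hβ₁ : β 1 = 0 := by
    by_contra hne
    exact (L_lt_L_zero_right hsupp h12 h2 hr hβ₀ hne hcond').not_ge hmax_r
  rw [hβ₁] at hmax_r
  exact ⟨hβ₁, le_antisymm hβ₀
    (le_abs_of_L_zero_right_le hsupp hpos (h2.trans h12).ne' hmax_r)⟩

/-- let b₀ be the positive number with ‖(b₀,b₀)‖_q = r (i.e. b₀ = r/2^{1/q},
with b₀ = r if q = ∞), and suppose Δ₁ > Δ₂ > 0 satisfy
(1/|μ|)∫₀^∞ e^{-4b₀²t} dμ(t) < (Δ₁²−Δ₂²)/(Δ₁²+Δ₂²).  Then every maximizer β* of L_Δ over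
the ℓ_q-ball of radius r satisfies β*₂ = 0 and |β*₁| = r, i.e. supp(β*) = {1}. -/
theorem stmt18 (μ : Measure ℝ) [IsFiniteMeasure μ] (hsupp : μ (Set.Iio 0) = 0)
    (hpos : 0 < μ (Set.Ioi 0)) (q : ENNReal) (hq : 1 ≤ q) (r : ℝ) (hr : 0 < r)
    (b₀ : ℝ) (hb₀ : 0 < b₀) (hb₀norm : lqNorm q b₀ b₀ = r)
    (Δ₁ Δ₂ : ℝ) (h12 : Δ₂ < Δ₁) (h2 : 0 < Δ₂)
    (hcond : (1 / (μ Set.univ).toReal) * ∫ t, Real.exp (-(4 * b₀ ^ 2 * t)) ∂μ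
      < (Δ₁ ^ 2 - Δ₂ ^ 2) / (Δ₁ ^ 2 + Δ₂ ^ 2))
    (β : Fin 2 → ℝ) (hβ : lqNorm q (β 0) (β 1) ≤ r)
    (hmax : ∀ γ : Fin 2 → ℝ, lqNorm q (γ 0) (γ 1) ≤ r →
      L (phi μ) Δ₁ Δ₂ (γ 0) (γ 1) ≤ L (phi μ) Δ₁ Δ₂ (β 0) (β 1)) :
    β 1 = 0 ∧ |β 0| = r :=
  stmt18_general μ hsupp hpos q hq r hr b₀ hb₀norm Δ₁ Δ₂ h12 h2 hcond β hβ hmax
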